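/- Let (A,d) be a dg-division ring such that ker(d) satisfies condition (REG). Then either (A,d) is acyclic, or the homology H(A,d) is a gr-division ring: every nonzero homogeneous element of H(A,d) = ker(d)/im(d) is invertible in H(A,d). -/

import Mathlib

/-- The data of a differential making a `ℤ`-graded ring a dg-ring. -/
structure DGRingData {A : Type*} [Ring A] (𝒜 : ℤ → AddSubgroup A) : Type _ where
  d : A →+ A
  d_mem : ∀ ⦃i : ℤ⦄ ⦃a : A⦄, a ∈ 𝒜 i → d a ∈ 𝒜 (i + 1)
  d_sq : ∀ a : A, d (d a) = 0
  leibniz : ∀ ⦃i : ℤ⦄ ⦃a : A⦄, a ∈ 𝒜 i → ∀ b : A,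
    d (a * b) = d a * b + (((-1 : ℤˣ) ^ i : ℤˣ) : ℤ) • (a * d b)

variable {A : Type*} [Ring A] (𝒜 : ℤ → AddSubgroup A) [GradedRing 𝒜] (D : DGRingData 𝒜)

/-- A dg-left ideal: a graded, `d`-stable left ideal, as an additive subgroup. -/
def IsDGLeftIdeal (I : AddSubgroup A) : Prop :=
  (∀ a : A, ∀ x ∈ I, a * x ∈ I) ∧
  (∀ x ∈ I, ∀ i : ℤ, GradedRing.proj 𝒜 i x ∈ I) ∧
  (∀ x ∈ I, D.d x ∈ I)

/-- A dg-right ideal: a graded, `d`-stable right ideal, as an additive subgroup. -/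
def IsDGRightIdeal (I : AddSubgroup A) : Prop :=
  (∀ a : A, ∀ x ∈ I, x * a ∈ I) ∧
  (∀ x ∈ I, ∀ i : ℤ, GradedRing.proj 𝒜 i x ∈ I) ∧
  (∀ x ∈ I, D.d x ∈ I)

/-- `ker d` is a gr-division ring: it is nonzero and every nonzero homogeneous cycle
is invertible within `ker d`. -/
def KerIsGrDivisionRing : Prop :=
  (∃ x : A, D.d x = 0 ∧ x ≠ 0) ∧
  ∀ (i : ℤ) (a : A), a ∈ 𝒜 i → D.d a = 0 → a ≠ 0 →
    ∃ b : A, D.d b = 0 ∧ a * b = 1 ∧ b * a = 1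

/-- Condition (REG): a homogeneous cycle is left regular in `ker d` iff it is right
regular in `ker d`. -/
def REG : Prop :=
  ∀ (i : ℤ) (u : A), u ∈ 𝒜 i → D.d u = 0 →
    ((∀ x : A, D.d x = 0 → u * x = 0 → x = 0) ↔
      (∀ x : A, D.d x = 0 → x * u = 0 → x = 0))


section Aux
variable {A : Type*} [Ring A] (𝒜 : ℤ → AddSubgroup A) [GradedRing 𝒜] (D : DGRingData 𝒜)

/-- The left ideal generated by `a`, as an additive subgroup. -/
def leftGen (a : A) : AddSubgroup A where
  carrier := {z | ∃ y, y * a = z}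
  zero_mem' := ⟨0, zero_mul a⟩
  add_mem' := by
    intro u v hu hv
    obtain ⟨y, rfl⟩ := hu; obtain ⟨y', rfl⟩ := hv
    exact ⟨y + y', add_mul y y' a⟩
  neg_mem' := by
    intro u hu
    obtain ⟨y, rfl⟩ := hu
    exact ⟨-y, neg_mul y a⟩

/-- The right ideal generated by `a`, as an additive subgroup. -/
def rightGen (a : A) : AddSubgroup A where
  carrier := {z | ∃ y, a * y = z}
  zero_mem' := ⟨0, mul_zero a⟩
  add_mem' := by
    intro u v hu hv
    obtain ⟨y, rfl⟩ := hu; obtain ⟨y', rfl⟩ := hv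
    exact ⟨y + y', mul_add a y y'⟩
  neg_mem' := by
    intro u hu
    obtain ⟨y, rfl⟩ := hu
    exact ⟨-y, mul_neg a y⟩

theorem mem_leftGen_iff (a z : A) : z ∈ leftGen a ↔ ∃ y, y * a = z := Iff.rfl

theorem mem_rightGen_iff (a z : A) : z ∈ rightGen a ↔ ∃ y, a * y = z := Iff.rfl

theorem proj_mul_right {i : ℤ} {a : A} (hi : a ∈ 𝒜 i) (x : A) (j : ℤ) :
    ∃ y : A, y * a = GradedRing.proj 𝒜 j (x * a) := by
  refine DirectSum.Decomposition.inductionOn 𝒜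
    (motive := fun x => ∃ y : A, y * a = GradedRing.proj 𝒜 j (x * a))
    ?_ (fun {k} m => ?_) (fun x x' hx hx' => ?_) x
  · exact ⟨0, by simp⟩
  · show ∃ y : A, y * a = GradedRing.proj 𝒜 j ((m : A) * a)
    rw [GradedRing.proj_apply]
    by_cases hjk : k + i = j
    · exact ⟨m, by rw [DirectSum.decompose_of_mem_same 𝒜
        (hjk ▸ SetLike.mul_mem_graded m.2 hi)]⟩
    · exact ⟨0, by rw [DirectSum.decompose_of_mem_ne 𝒜
        (SetLike.mul_mem_graded m.2 hi) hjk, zero_mul]⟩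
  · show ∃ y : A, y * a = GradedRing.proj 𝒜 j ((x + x') * a)
    obtain ⟨y, hy⟩ := hx; obtain ⟨y', hy'⟩ := hx'
    exact ⟨y + y', by rw [add_mul, hy, hy', add_mul, map_add]⟩

theorem proj_mul_left {i : ℤ} {a : A} (hi : a ∈ 𝒜 i) (x : A) (j : ℤ) :
    ∃ y : A, a * y = GradedRing.proj 𝒜 j (a * x) := by
  refine DirectSum.Decomposition.inductionOn 𝒜
    (motive := fun x => ∃ y : A, a * y = GradedRing.proj 𝒜 j (a * x))
    ?_ (fun {k} m => ?_) (fun x x' hx hx' => ?_) x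
  · exact ⟨0, by simp⟩
  · show ∃ y : A, a * y = GradedRing.proj 𝒜 j (a * (m : A))
    rw [GradedRing.proj_apply]
    by_cases hjk : i + k = j
    · exact ⟨m, by rw [DirectSum.decompose_of_mem_same 𝒜
        (hjk ▸ SetLike.mul_mem_graded hi m.2)]⟩
    · exact ⟨0, by rw [DirectSum.decompose_of_mem_ne 𝒜
        (SetLike.mul_mem_graded hi m.2) hjk, mul_zero]⟩
  · show ∃ y : A, a * y = GradedRing.proj 𝒜 j (a * (x + x'))
    obtain ⟨y, hy⟩ := hx; obtain ⟨y', hy'⟩ := hx'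
    exact ⟨y + y', by rw [mul_add, hy, hy', mul_add, map_add]⟩

theorem d_mul_cycle {a : A} {i : ℤ} (hi : a ∈ 𝒜 i) (ha : D.d a = 0) (x : A) :
    D.d (x * a) = D.d x * a := by
  refine DirectSum.Decomposition.inductionOn 𝒜
    (motive := fun x => D.d (x * a) = D.d x * a)
    ?_ (fun {k} m => ?_) (fun x x' hx hx' => ?_) x
  · simp
  · show D.d ((m : A) * a) = D.d (m : A) * a
    rw [D.leibniz m.2 a, ha, mul_zero, smul_zero, add_zero]
  · show D.d ((x + x') * a) = D.d (x + x') * a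
    beta_reduce at hx hx'
    rw [add_mul, map_add, map_add, hx, hx', add_mul]

theorem d_cycle_mul {a : A} {i : ℤ} (hi : a ∈ 𝒜 i) (ha : D.d a = 0) (x : A) :
    ∃ y : A, a * y = D.d (a * x) := by
  refine ⟨(((-1 : ℤˣ) ^ i : ℤˣ) : ℤ) • D.d x, ?_⟩
  rw [D.leibniz hi x, ha, zero_mul, zero_add, mul_smul_comm]

end Aux

/-- a dg-division ring whose cycles satisfy (REG) is either acyclic, or its
homology `H(A,d) = ker d / im d` is a gr-division ring: it is nonzero and every nonzero
homogeneous class is invertible (inverses being represented by cycles `b`, with the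
products `a·b` and `b·a` equal to `1` modulo boundaries). -/
theorem stmt_6 {A : Type*} [Ring A] [Nontrivial A] (𝒜 : ℤ → AddSubgroup A) [GradedRing 𝒜]
    (D : DGRingData 𝒜)
    (hleft : ∀ I : AddSubgroup A, IsDGLeftIdeal 𝒜 D I → I = ⊥ ∨ I = ⊤)
    (hright : ∀ I : AddSubgroup A, IsDGRightIdeal 𝒜 D I → I = ⊥ ∨ I = ⊤)
    (hreg : REG 𝒜 D) :
    (∀ a : A, D.d a = 0 → ∃ b : A, D.d b = a) ∨
    ((∃ a : A, D.d a = 0 ∧ ¬ ∃ c : A, D.d c = a) ∧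
      ∀ (i : ℤ) (a : A), a ∈ 𝒜 i → D.d a = 0 → (¬ ∃ c : A, D.d c = a) →
        ∃ b : A, D.d b = 0 ∧ (∃ c : A, D.d c = a * b - 1) ∧ (∃ c : A, D.d c = b * a - 1)) := by
  by_cases hac : ∀ a : A, D.d a = 0 → ∃ b : A, D.d b = a
  · exact Or.inl hac
  · right
    push_neg at hac
    obtain ⟨a₀, ha₀, hnb₀⟩ := hac
    refine ⟨⟨a₀, ha₀, fun ⟨c, hc⟩ => hnb₀ c hc⟩, ?_⟩
    intro i a hmem hcyc hnb
    have ha0 : a ≠ 0 := fun h => hnb ⟨0, by rw [map_zero, h]⟩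
    have hL : leftGen a = (⊤ : AddSubgroup A) := by
      have hIdeal : IsDGLeftIdeal 𝒜 D (leftGen a) := by
        refine ⟨?_, ?_, ?_⟩
        · rintro r x ⟨y, rfl⟩
          exact ⟨r * y, mul_assoc r y a⟩
        · rintro x ⟨y, rfl⟩ j
          exact proj_mul_right 𝒜 hmem y j
        · rintro x ⟨y, rfl⟩
          exact ⟨D.d y, (d_mul_cycle 𝒜 D hmem hcyc y).symm⟩
      rcases hleft (leftGen a) hIdeal with h | h
      · have hmemL : a ∈ leftGen a := ⟨1, one_mul a⟩
        rw [h, AddSubgroup.mem_bot] at hmemL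
        exact absurd hmemL ha0
      · exact h
    have hR : rightGen a = (⊤ : AddSubgroup A) := by
      have hIdeal : IsDGRightIdeal 𝒜 D (rightGen a) := by
        refine ⟨?_, ?_, ?_⟩
        · rintro r x ⟨y, rfl⟩
          exact ⟨y * r, (mul_assoc a y r).symm⟩
        · rintro x ⟨y, rfl⟩ j
          exact proj_mul_left 𝒜 hmem y j
        · rintro x ⟨y, rfl⟩
          exact d_cycle_mul 𝒜 D hmem hcyc y
      rcases hright (rightGen a) hIdeal with h | h
      · have hmemR : a ∈ rightGen a := ⟨1, mul_one a⟩
        rw [h, AddSubgroup.mem_bot] at hmemR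
        exact absurd hmemR ha0
      · exact h
    obtain ⟨y, hy⟩ : ∃ y : A, y * a = 1 := by rw [← mem_leftGen_iff, hL]; trivial
    obtain ⟨z, hz⟩ : ∃ z : A, a * z = 1 := by rw [← mem_rightGen_iff, hR]; trivial
    have hyz : y = z := by rw [← one_mul z, ← hy, mul_assoc, hz, mul_one]
    have hd1 : D.d (1 : A) = 0 := by
      have h := D.leibniz (SetLike.one_mem_graded 𝒜) (1 : A)
      simp only [one_mul, mul_one, pow_zero, Units.val_one, one_smul, zpow_zero] at h
      exact (left_eq_add.mp h)
    have hdy : D.d y = 0 := by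
      have h1 : D.d y * a = 0 := by
        rw [← d_mul_cycle 𝒜 D hmem hcyc y, hy]; exact hd1
      calc D.d y = D.d y * (a * z) := by rw [hz, mul_one]
        _ = D.d y * a * z := by rw [mul_assoc]
        _ = 0 := by rw [h1, zero_mul]
    exact ⟨y, hdy, ⟨0, by rw [hyz, hz, sub_self, map_zero]⟩,
      ⟨0, by rw [hy, sub_self, map_zero]⟩⟩
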